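/- For all natural numbers n, m: (n+m)! = Σ_{r=0}^{n} Σ_{j=0}^{m} Σ_{k=0}^{n+m} c(m,j) · C(r, k−j) · c(n,r) · m^{r−k+j}, where C(r, k−j) is the ordinary binomial coefficient, interpreted as 0 when j > k or k − j > r, and the exponent r − k + j is the corresponding nonnegative integer when C(r,k−j) ≠ 0. -/

import Mathlib

/-- The unsigned Stirling numbers of the first kind `c(n,k)`. -/
def stirling1 : ℕ → ℕ → ℕ
  | 0, 0 => 1
  | 0, _ + 1 => 0
  | _ + 1, 0 => 0
  | n + 1, k + 1 =>
    if k + 1 ≤ n + 1 then stirling1 n k + n * stirling1 n (k + 1) else 0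

/-!
Summing over `k` first, the binomial theorem collapses the innermost sum to `(m + 1) ^ r`,
independently of `j`. The double sum then factors as
`(∑ j, c(m,j)) * (∑ r, c(n,r) (m + 1) ^ r) = m! * (m + 1) (m + 2) ⋯ (m + n) = (n + m)!`,
by the generating function `∑ k, c(n,k) x ^ k = x (x + 1) ⋯ (x + n - 1)` at `x = 1` and at
`x = m + 1`.
-/

open Finset Polynomial

theorem stirling1_eq_stirlingFirst : ∀ n k, stirling1 n k = Nat.stirlingFirst n k
  | 0, 0 | 0, _ + 1 | _ + 1, 0 => rfl
  | n + 1, k + 1 => by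
    rw [stirling1, Nat.stirlingFirst_succ_succ, stirling1_eq_stirlingFirst n k,
      stirling1_eq_stirlingFirst n (k + 1)]
    split_ifs
    · ring
    · rw [Nat.stirlingFirst_eq_zero_of_lt (by omega), Nat.stirlingFirst_eq_zero_of_lt (by omega),
        mul_zero]

theorem Nat.sum_range_stirlingFirst_mul_pow {R : Type*} [CommSemiring R] (n : ℕ) (x : R) :
    ∑ k ∈ range (n + 1), (stirlingFirst n k : R) * x ^ k = (ascPochhammer R n).eval x := by
  induction n with
  | zero => simp
  | succ n ih =>
    set T := ∑ k ∈ range n, (stirlingFirst n (k + 1) : R) * x ^ (k + 1)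
    have h_split : ∑ k ∈ range (n + 1), (stirlingFirst n k : R) * x ^ k
        = T + stirlingFirst n 0 := by
      rw [sum_range_succ', pow_zero, mul_one]
    have h_top : (stirlingFirst n (n + 1) : R) = 0 := by
      rw [stirlingFirst_eq_zero_of_lt n.lt_succ_self, Nat.cast_zero]
    have h_bot : (stirlingFirst n 0 : R) * n = 0 := by
      cases n <;> simp
    calc ∑ k ∈ range (n + 1 + 1), (stirlingFirst (n + 1) k : R) * x ^ k
        = ∑ k ∈ range (n + 1), ((n : R) * (stirlingFirst n (k + 1) * x ^ (k + 1))
            + x * (stirlingFirst n k * x ^ k)) := by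
          rw [sum_range_succ']
          simp only [stirlingFirst_succ_succ, stirlingFirst_succ_zero, Nat.cast_add, Nat.cast_mul,
            Nat.cast_zero, zero_mul, add_zero]
          exact sum_congr rfl fun k _ => by ring
      _ = n * T + x * ∑ k ∈ range (n + 1), (stirlingFirst n k : R) * x ^ k := by
          rw [sum_add_distrib, ← mul_sum, ← mul_sum, sum_range_succ, h_top, zero_mul, add_zero]
      _ = (ascPochhammer R (n + 1)).eval x := by
          rw [ascPochhammer_succ_eval, ← ih, h_split, mul_add _ x, add_mul T _ (n : R), h_bot,
            add_zero]
          ring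

theorem Nat.sum_range_stirlingFirst (n : ℕ) :
    ∑ k ∈ range (n + 1), stirlingFirst n k = n.factorial := by
  simpa using sum_range_stirlingFirst_mul_pow n (1 : ℕ)

theorem Nat.sum_range_stirlingFirst_mul_pow_eq_ascFactorial (n x : ℕ) :
    ∑ k ∈ range (n + 1), stirlingFirst n k * x ^ k = x.ascFactorial n := by
  simpa [ascPochhammer_nat_eq_ascFactorial] using sum_range_stirlingFirst_mul_pow n x

theorem sum_range_ite_choose_mul_pow {R : Type*} [CommSemiring R] (x : R) {r j N : ℕ}
    (h : j + r < N) :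
    ∑ k ∈ range N, (if j ≤ k then (r.choose (k - j) : R) * x ^ (r - (k - j)) else 0)
      = (x + 1) ^ r := by
  rw [range_eq_Ico, ← sum_Ico_consecutive _ (Nat.zero_le j) (by omega : j ≤ N),
    sum_eq_zero fun k hk => if_neg (by rw [mem_Ico] at hk; omega), zero_add,
    sum_Ico_eq_sum_range]
  simp only [le_add_iff_nonneg_right, Nat.zero_le, if_true, add_tsub_cancel_left]
  rw [← sum_subset (range_subset_range.mpr (by omega : r + 1 ≤ N - j))
      fun i _ hi => by rw [Nat.choose_eq_zero_of_lt (by simpa using hi), Nat.cast_zero, zero_mul],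
    add_comm x, add_pow]
  exact sum_congr rfl fun i _ => by ring

/-- `(n+m)! = Σ_r Σ_j Σ_k c(m,j)·C(r,k-j)·c(n,r)·m^{r-k+j}`, where the summand is `0`
when `j > k` (and `C(r,k-j) = 0` when `k - j > r`). -/
theorem mezo_dual_spivey_second (n m : ℕ) :
    (n + m).factorial
    = ∑ r ∈ Finset.range (n + 1), ∑ j ∈ Finset.range (m + 1),
        ∑ k ∈ Finset.range (n + m + 1),
        stirling1 m j *
          (if j ≤ k then r.choose (k - j) * m ^ (r - (k - j)) else 0) *
          stirling1 n r := by
  simp only [stirling1_eq_stirlingFirst]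
  calc (n + m).factorial = m.factorial * (m + 1).ascFactorial n := by
        rw [Nat.factorial_mul_ascFactorial, add_comm]
    _ = ∑ r ∈ range (n + 1), ∑ j ∈ range (m + 1),
          Nat.stirlingFirst m j * (Nat.stirlingFirst n r * (m + 1) ^ r) := by
        rw [← Nat.sum_range_stirlingFirst, ← Nat.sum_range_stirlingFirst_mul_pow_eq_ascFactorial,
          sum_mul_sum, sum_comm]
    _ = _ := by
        refine sum_congr rfl fun r hr => sum_congr rfl fun j hj => ?_
        rw [mem_range] at hr hj
        have h_binom := sum_range_ite_choose_mul_pow m (show j + r < n + m + 1 by omega)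
        simp only [Nat.cast_id] at h_binom
        rw [← sum_mul, ← mul_sum, h_binom]
        ring
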